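/- arXiv:2109.13566 — 6 statements merged into one kernel-verified Lean document; each statement's English description precedes it below -/
import Mathlib

section
/- Let f₁, f₂: ℝⁿ → (-∞, ∞] be closed proper convex functions. Then inf_x (f₁(x) - f₂(x)) = inf_y (f₂*(y) - f₁*(y)), where h* denotes the Fenchel conjugate (Toland duality). -/
open scoped RealInnerProductSpace

lemma exists_subgradient_aux {E : Type*} [NormedAddCommGroup E] [InnerProductSpace ℝ E]
    [FiniteDimensional ℝ E] {f : E → ℝ} (hf : ConvexOn ℝ Set.univ f) (x₀ : E) :
    ∃ y : E, ∀ x, ⟪y, x⟫ - f x ≤ ⟪y, x₀⟫ - f x₀ := by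
  have hcont : Continuous f := hf.locallyLipschitz.continuous
  set S : Set (E × ℝ) := {p : E × ℝ | p.1 ∈ Set.univ ∧ f p.1 < p.2} with hSdef
  have hopen : IsOpen S := by
    have hS : S = {p : E × ℝ | f p.1 < p.2} := by ext p; simp [hSdef]
    rw [hS]
    exact isOpen_lt (hcont.comp continuous_fst) continuous_snd
  have hconvS : Convex ℝ S := hf.convex_strict_epigraph
  have hnot : (x₀, f x₀) ∉ S := by simp [hSdef]
  obtain ⟨F, hF⟩ := geometric_hahn_banach_open_point hconvS hopen hnot
  set α : ℝ := F (0, 1) with hα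
  have hFsplit : ∀ (x : E) (t : ℝ), F (x, t) = F (x, 0) + t * α := by
    intro x t
    have hxt : (x, t) = (x, (0:ℝ)) + t • ((0:E), (1:ℝ)) := by
      simp [Prod.ext_iff]
    rw [hxt, map_add, map_smul, smul_eq_mul, hα]
  have hkey : ∀ x t, f x < t → F (x, 0) + t * α < F (x₀, 0) + f x₀ * α := by
    intro x t ht
    have h := hF (x, t) ⟨trivial, ht⟩
    rwa [hFsplit x t, hFsplit x₀ (f x₀)] at h
  have hαneg : α < 0 := by
    have h := hkey x₀ (f x₀ + 1) (by linarith)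
    nlinarith
  have hle : ∀ x, F (x, 0) + f x * α ≤ F (x₀, 0) + f x₀ * α := by
    intro x
    by_contra h
    push_neg at h
    set d := F (x, 0) + f x * α - (F (x₀, 0) + f x₀ * α) with hd
    have hd0 : 0 < d := by linarith
    have hs0 : 0 < d / (-2 * α) := by
      apply div_pos hd0; linarith
    have hαne : α ≠ 0 := hαneg.ne
    have hmul : (d / (-2 * α)) * α = -(d / 2) := by
      field_simp
    have h2 := hkey x (f x + d / (-2 * α)) (by linarith)
    rw [mul_comm, mul_add] at h2
    nlinarith
  set φ : E →L[ℝ] ℝ := ((-α)⁻¹) • (F.comp (ContinuousLinearMap.inl ℝ E ℝ)) with hφ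
  refine ⟨(InnerProductSpace.toDual ℝ E).symm φ, fun x => ?_⟩
  have hyx : ∀ z : E, ⟪(InnerProductSpace.toDual ℝ E).symm φ, z⟫ = (-α)⁻¹ * F (z, 0) := by
    intro z
    rw [InnerProductSpace.toDual_symm_apply]
    simp [hφ]
  rw [hyx, hyx]
  have h := hle x
  have hα' : (0:ℝ) < -α := by linarith
  have h1 : F (x, 0) - F (x₀, 0) ≤ (f x - f x₀) * (-α) := by nlinarith
  have h2 := mul_le_mul_of_nonneg_left h1 (inv_nonneg.mpr hα'.le)
  have h3 : (-α)⁻¹ * ((f x - f x₀) * (-α)) = f x - f x₀ := by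
    rw [mul_comm, mul_assoc, mul_inv_cancel₀ hα'.ne', mul_one]
  nlinarith

/-- Toland duality: for convex `f₁, f₂ : ℝⁿ → ℝ` (finite-valued, hence closed
proper, with `dom f₁ ⊆ dom f₂` automatic), letting `h* y = ⨆ x, ⟨y,x⟩ - h x` (valued in
`EReal`), one has `inf_x (f₁ x - f₂ x) = inf_{y ∈ dom f₂*} (f₂* y - f₁* y)`,
where by the convention `dom f₂* ⊆ dom f₁*` the infimum on the right is taken over
the effective domain of `f₂*`. -/
theorem stmt_4 {n : ℕ} (f₁ f₂ : EuclideanSpace ℝ (Fin n) → ℝ)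
    (hconv₁ : ConvexOn ℝ Set.univ f₁) (hconv₂ : ConvexOn ℝ Set.univ f₂)
    (conj₁ conj₂ : EuclideanSpace ℝ (Fin n) → EReal)
    (hconj₁ : ∀ y, conj₁ y = ⨆ x, ((⟪y, x⟫ - f₁ x : ℝ) : EReal))
    (hconj₂ : ∀ y, conj₂ y = ⨆ x, ((⟪y, x⟫ - f₂ x : ℝ) : EReal))
    (hdom : ∀ y, conj₂ y ≠ ⊤ → conj₁ y ≠ ⊤) :
    (⨅ x, ((f₁ x - f₂ x : ℝ) : EReal)) =
      ⨅ (y) (_ : conj₂ y ≠ ⊤), (conj₂ y - conj₁ y) := by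
  have hbot₁ : ∀ y, conj₁ y ≠ ⊥ := by
    intro y
    have h := hconj₁ y ▸ le_iSup (fun x => ((⟪y, x⟫ - f₁ x : ℝ) : EReal)) 0
    intro hb
    rw [hb] at h
    exact (EReal.bot_lt_coe _).not_ge h
  have hbot₂ : ∀ y, conj₂ y ≠ ⊥ := by
    intro y
    have h := hconj₂ y ▸ le_iSup (fun x => ((⟪y, x⟫ - f₂ x : ℝ) : EReal)) 0
    intro hb
    rw [hb] at h
    exact (EReal.bot_lt_coe _).not_ge h
  apply le_antisymm
  · refine le_iInf fun y => le_iInf fun hy => ?_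
    have hy1 : conj₁ y ≠ ⊤ := hdom y hy
    set a := (conj₁ y).toReal with ha
    set b := (conj₂ y).toReal with hb
    have ha' : ((a : ℝ) : EReal) = conj₁ y := EReal.coe_toReal hy1 (hbot₁ y)
    have hb' : ((b : ℝ) : EReal) = conj₂ y := EReal.coe_toReal hy (hbot₂ y)
    rw [← ha', ← hb', ← EReal.coe_sub]
    apply le_of_forall_gt_imp_ge_of_dense
    intro c hc
    induction c using EReal.rec with
    | bot => exact (not_lt_bot hc).elim
    | top => exact le_top
    | coe r =>
      have hr : b - a < r := EReal.coe_lt_coe_iff.mp hc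
      set ε := r - (b - a) with hε
      have hε0 : 0 < ε := by simp [hε]; linarith
      have hex : ∃ x, a - ε < ⟪y, x⟫ - f₁ x := by
        by_contra hno
        push_neg at hno
        have hle : conj₁ y ≤ ((a - ε : ℝ) : EReal) := by
          rw [hconj₁]
          exact iSup_le fun x => EReal.coe_le_coe_iff.mpr (hno x)
        rw [← ha'] at hle
        have := EReal.coe_le_coe_iff.mp hle
        linarith
      obtain ⟨x, hx⟩ := hex
      have hxb : ⟪y, x⟫ - f₂ x ≤ b := by
        have h := hconj₂ y ▸ le_iSup (fun z => ((⟪y, z⟫ - f₂ z : ℝ) : EReal)) x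
        rw [← hb'] at h
        exact EReal.coe_le_coe_iff.mp h
      refine le_trans (iInf_le _ x) ?_
      exact EReal.coe_le_coe_iff.mpr (by linarith)
  · refine le_iInf fun x => ?_
    obtain ⟨y, hy⟩ := exists_subgradient_aux hconv₂ x
    have hval : conj₂ y = ((⟪y, x⟫ - f₂ x : ℝ) : EReal) := by
      rw [hconj₂]
      exact le_antisymm (iSup_le fun z => EReal.coe_le_coe_iff.mpr (hy z))
        (le_iSup (fun z => ((⟪y, z⟫ - f₂ z : ℝ) : EReal)) x)
    have hy2top : conj₂ y ≠ ⊤ := by rw [hval]; exact EReal.coe_ne_top _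
    have hy1top : conj₁ y ≠ ⊤ := hdom y hy2top
    set a := (conj₁ y).toReal with ha
    have ha' : ((a : ℝ) : EReal) = conj₁ y := EReal.coe_toReal hy1top (hbot₁ y)
    have hax : ⟪y, x⟫ - f₁ x ≤ a := by
      have h := hconj₁ y ▸ le_iSup (fun z => ((⟪y, z⟫ - f₁ z : ℝ) : EReal)) x
      rw [← ha'] at h
      exact EReal.coe_le_coe_iff.mp h
    refine le_trans (iInf_le _ y) (le_trans (iInf_le _ hy2top) ?_)
    rw [hval, ← ha', ← EReal.coe_sub]
    exact EReal.coe_le_coe_iff.mpr (by linarith)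
end

section
/- In the DCA, if the quantity T(x^{k+1}) := f₁(x^k) - f₁(x^{k+1}) - ⟨g₂^k, x^k - x^{k+1}⟩ equals zero, where x^{k+1} minimizes x ↦ f₁(x) - ⟨g₂^k, x⟩ and g₂^k ∈ ∂f₂(x^k), then x^k is a critical point of f₁ - f₂, i.e., ∂f₁(x^k) ∩ ∂f₂(x^k) ≠ ∅. -/
open scoped RealInnerProductSpace

/-- in the DCA, if `T(x^{k+1}) = f₁(x^k) - f₁(x^{k+1}) - ⟨g₂^k, x^k - x^{k+1}⟩ = 0`,
where `x^{k+1}` minimizes `x ↦ f₁ x - ⟨g₂^k, x⟩` and `g₂^k ∈ ∂f₂(x^k)`, then `x^k` is a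
critical point of `f₁ - f₂`, i.e. `∂f₁(x^k) ∩ ∂f₂(x^k) ≠ ∅`. -/
theorem stmt_6 {n : ℕ} (f₁ f₂ : EuclideanSpace ℝ (Fin n) → ℝ)
    (hconv₁ : ConvexOn ℝ Set.univ f₁) (hconv₂ : ConvexOn ℝ Set.univ f₂)
    (xk xk1 g₂ : EuclideanSpace ℝ (Fin n))
    (hg₂ : ∀ y, f₂ y ≥ f₂ xk + ⟪g₂, y - xk⟫)
    (hmin : ∀ x, f₁ xk1 - ⟪g₂, xk1⟫ ≤ f₁ x - ⟪g₂, x⟫)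
    (hT : f₁ xk - f₁ xk1 - ⟪g₂, xk - xk1⟫ = 0) :
    ∃ g : EuclideanSpace ℝ (Fin n),
      (∀ y, f₁ y ≥ f₁ xk + ⟪g, y - xk⟫) ∧ (∀ y, f₂ y ≥ f₂ xk + ⟪g, y - xk⟫) := by
  refine ⟨g₂, fun y => ?_, hg₂⟩
  have h1 := hmin y
  simp only [inner_sub_right] at hT ⊢
  linarith
end

section
/- Let f₁, f₂ be proper convex functions on ℝⁿ such that f = f₁ - f₂ ≥ f⋆. Let x¹, ..., x^{N+1} be generated by the DCA (g₂^k ∈ ∂f₂(x^k), x^{k+1} ∈ argmin f₁(·) - ⟨g₂^k, ·⟩). Then min_{1≤k≤N} [f₁(x^k) - f₁(x^{k+1}) - ⟨g₂^k, x^k - x^{k+1}⟩] ≤ (f(x¹) - f⋆)/N. -/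
open scoped RealInnerProductSpace

/-- for convex `f₁, f₂` with `f = f₁ - f₂ ≥ f⋆` and DCA iterates
`x¹, …, x^{N+1}` (with `g₂^k ∈ ∂f₂(x^k)` and `x^{k+1}` minimizing `f₁(·) - ⟨g₂^k, ·⟩`),
`min_{1 ≤ k ≤ N} [f₁(x^k) - f₁(x^{k+1}) - ⟨g₂^k, x^k - x^{k+1}⟩] ≤ (f(x¹) - f⋆) / N`. -/
theorem stmt_8 {n : ℕ} (f₁ f₂ : EuclideanSpace ℝ (Fin n) → ℝ)
    (hconv₁ : ConvexOn ℝ Set.univ f₁) (hconv₂ : ConvexOn ℝ Set.univ f₂)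
    (fstar : ℝ) (hlb : ∀ x, fstar ≤ f₁ x - f₂ x)
    (N : ℕ) (hN : 1 ≤ N)
    (x g₂ : ℕ → EuclideanSpace ℝ (Fin n))
    (hg₂ : ∀ k ∈ Finset.Icc 1 N, ∀ y, f₂ y ≥ f₂ (x k) + ⟪g₂ k, y - x k⟫)
    (hmin : ∀ k ∈ Finset.Icc 1 N, ∀ z, f₁ (x (k + 1)) - ⟪g₂ k, x (k + 1)⟫ ≤ f₁ z - ⟪g₂ k, z⟫) :
    ∃ k ∈ Finset.Icc 1 N,
      f₁ (x k) - f₁ (x (k + 1)) - ⟪g₂ k, x k - x (k + 1)⟫ ≤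
        (f₁ (x 1) - f₂ (x 1) - fstar) / N := by
  set F : ℕ → ℝ := fun k => f₁ (x k) - f₂ (x k) with hF
  set a : ℕ → ℝ := fun k => f₁ (x k) - f₁ (x (k + 1)) - ⟪g₂ k, x k - x (k + 1)⟫ with ha
  have hNpos : (0 : ℝ) < N := by exact_mod_cast hN
  have key : ∀ k ∈ Finset.Icc 1 N, a k ≤ F k - F (k + 1) := by
    intro k hk
    have h2 := hg₂ k hk (x (k + 1))
    simp only [ha, hF]
    have : ⟪g₂ k, x (k+1) - x k⟫ = - ⟪g₂ k, x k - x (k+1)⟫ := by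
      rw [← inner_neg_right]; congr 1; abel
    rw [this] at h2
    linarith
  have hsum : ∑ k ∈ Finset.Icc 1 N, a k ≤ F 1 - F (N + 1) := by
    have htel : ∑ k ∈ Finset.Icc 1 N, (F k - F (k + 1)) = F 1 - F (N + 1) := by
      have := Finset.sum_range_sub' (fun i => F (i + 1)) N
      rw [show Finset.Icc 1 N = Finset.Ico 1 (N+1) by rw [Finset.Ico_add_one_right_eq_Icc], Finset.sum_Ico_eq_sum_range]
      simpa [add_comm] using this
    calc ∑ k ∈ Finset.Icc 1 N, a k ≤ ∑ k ∈ Finset.Icc 1 N, (F k - F (k + 1)) :=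
          Finset.sum_le_sum key
      _ = F 1 - F (N + 1) := htel
  have hsum2 : ∑ k ∈ Finset.Icc 1 N, a k ≤ ∑ k ∈ Finset.Icc 1 N, (F 1 - fstar) / N := by
    rw [Finset.sum_const, Nat.card_Icc]
    have hFN : fstar ≤ F (N + 1) := hlb _
    have : (N + 1 - 1 : ℕ) = N := by omega
    rw [this, nsmul_eq_mul, mul_div_cancel₀ _ (ne_of_gt hNpos)]
    linarith
  have hne : (Finset.Icc 1 N).Nonempty := ⟨1, by simp [hN]⟩
  obtain ⟨k, hk, hak⟩ := Finset.exists_le_of_sum_le hne hsum2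
  exact ⟨k, hk, hak⟩
end

section
/- Let f₁ be μ₁-strongly convex and f₂ be μ₂-strongly convex with μ₁ + μ₂ > 0, and f = f₁ - f₂ ≥ f⋆. For DCA iterates x¹,...,x^{N+1}, one has ∑_{k=1}^{N} ‖x^{k+1} - x^k‖² ≤ 2(f(x¹) - f(x^{N+1}))/(μ₁ + μ₂), and consequently min_{1≤k≤N} ‖x^{k+1} - x^k‖ ≤ sqrt(2(f(x¹) - f⋆)/((μ₁+μ₂)N)). -/
open scoped RealInnerProductSpace

/-- If `f` is `μ`-strongly convex and `x⋆` minimizes `f - ⟪g, ·⟫`, then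
`f x⋆ - ⟪g, x⋆⟫ + μ/2 ‖z - x⋆‖² ≤ f z - ⟪g, z⟫` for all `z`. -/
lemma strong_min_aux {n : ℕ} (f : EuclideanSpace ℝ (Fin n) → ℝ) (μ : ℝ)
    (hsc : ConvexOn ℝ Set.univ (fun x => f x - μ / 2 * ‖x‖ ^ 2))
    (g xs : EuclideanSpace ℝ (Fin n))
    (hmin : ∀ z, f xs - ⟪g, xs⟫ ≤ f z - ⟪g, z⟫) (z : EuclideanSpace ℝ (Fin n)) :
    f xs - ⟪g, xs⟫ + μ / 2 * ‖z - xs‖ ^ 2 ≤ f z - ⟪g, z⟫ := by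
  have hsf : StrongConvexOn Set.univ μ f := strongConvexOn_iff_convex.mpr hsc
  set c : ℝ := μ / 2 * ‖z - xs‖ ^ 2 with hc
  set a : ℝ := (f z - ⟪g, z⟫) - (f xs - ⟪g, xs⟫) with ha
  -- key inequality for every `t ∈ (0, 1]` : `(1 - t) * c ≤ a`
  have key : ∀ t : ℝ, 0 < t → t ≤ 1 → (1 - t) * c ≤ a := by
    intro t ht ht1
    have hconv := hsf.2 (Set.mem_univ z) (Set.mem_univ xs) ht.le
      (by linarith : (0:ℝ) ≤ 1 - t) (by ring)
    have hlin : ⟪g, t • z + (1 - t) • xs⟫ = t * ⟪g, z⟫ + (1 - t) * ⟪g, xs⟫ := by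
      rw [inner_add_right, real_inner_smul_right, real_inner_smul_right]
    have hm := hmin (t • z + (1 - t) • xs)
    simp only [smul_eq_mul] at hconv
    rw [hlin] at hm
    have : t * ((1 - t) * c) ≤ t * a := by
      simp only [hc, ha]; nlinarith [hconv, hm]
    exact le_of_mul_le_mul_left this ht
  have ha0 : 0 ≤ a := by have := key 1 one_pos le_rfl; linarith
  have hca : c ≤ a := by
    rcases le_or_gt c 0 with h | h
    · linarith
    · refine le_of_forall_pos_le_add fun ε hε => ?_
      rcases le_or_gt c ε with h' | h'
      · linarith
      · have ht : (0:ℝ) < ε / c := div_pos hε h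
        have ht1 : ε / c ≤ 1 := by
          rw [div_le_one h]; linarith
        have := key (ε / c) ht ht1
        have : (1 - ε / c) * c = c - ε := by field_simp
        nlinarith [key (ε / c) ht ht1]
  simp only [hc, ha] at hca ⊢
  linarith

/-- if `f₁` is `μ₁`-strongly convex, `f₂` is `μ₂`-strongly convex, `μ₁ + μ₂ > 0`,
and `f = f₁ - f₂ ≥ f⋆`, then for DCA iterates `x¹, …, x^{N+1}`,
`∑_{k=1}^N ‖x^{k+1} - x^k‖² ≤ 2 (f(x¹) - f(x^{N+1})) / (μ₁ + μ₂)` and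
`min_{1 ≤ k ≤ N} ‖x^{k+1} - x^k‖ ≤ √(2 (f(x¹) - f⋆) / ((μ₁ + μ₂) N))`. -/
theorem stmt_9 {n : ℕ} (f₁ f₂ : EuclideanSpace ℝ (Fin n) → ℝ) (μ₁ μ₂ : ℝ)
    (hμ₁ : 0 ≤ μ₁) (hμ₂ : 0 ≤ μ₂) (hμ : 0 < μ₁ + μ₂)
    (hsc₁ : ConvexOn ℝ Set.univ (fun x => f₁ x - μ₁ / 2 * ‖x‖ ^ 2))
    (hsc₂ : ConvexOn ℝ Set.univ (fun x => f₂ x - μ₂ / 2 * ‖x‖ ^ 2))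
    (fstar : ℝ) (hlb : ∀ x, fstar ≤ f₁ x - f₂ x)
    (N : ℕ) (hN : 1 ≤ N)
    (x g₂ : ℕ → EuclideanSpace ℝ (Fin n))
    (hg₂ : ∀ k ∈ Finset.Icc 1 N, ∀ y, f₂ y ≥ f₂ (x k) + ⟪g₂ k, y - x k⟫)
    (hmin : ∀ k ∈ Finset.Icc 1 N, ∀ z, f₁ (x (k + 1)) - ⟪g₂ k, x (k + 1)⟫ ≤ f₁ z - ⟪g₂ k, z⟫) :
    (∑ k ∈ Finset.Icc 1 N, ‖x (k + 1) - x k‖ ^ 2 ≤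
        2 * ((f₁ (x 1) - f₂ (x 1)) - (f₁ (x (N + 1)) - f₂ (x (N + 1)))) / (μ₁ + μ₂)) ∧
      ∃ k ∈ Finset.Icc 1 N,
        ‖x (k + 1) - x k‖ ≤ Real.sqrt (2 * (f₁ (x 1) - f₂ (x 1) - fstar) / ((μ₁ + μ₂) * N)) := by
  set F : ℕ → ℝ := fun k => f₁ (x k) - f₂ (x k) with hF
  -- per-step decrease
  have step : ∀ k ∈ Finset.Icc 1 N,
      (μ₁ + μ₂) / 2 * ‖x (k + 1) - x k‖ ^ 2 ≤ F k - F (k + 1) := by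
    intro k hk
    have h1 := strong_min_aux f₁ μ₁ hsc₁ (g₂ k) (x (k + 1)) (hmin k hk) (x k)
    have hmin2 : ∀ z, f₂ (x k) - ⟪g₂ k, x k⟫ ≤ f₂ z - ⟪g₂ k, z⟫ := by
      intro z
      have := hg₂ k hk z
      rw [inner_sub_right] at this
      linarith
    have h2 := strong_min_aux f₂ μ₂ hsc₂ (g₂ k) (x k) hmin2 (x (k + 1))
    have hnr : ‖x k - x (k + 1)‖ = ‖x (k + 1) - x k‖ := norm_sub_rev _ _
    rw [hnr] at h1
    simp only [hF]
    nlinarith [h1, h2]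
  -- telescoping sum
  have htel : ∀ M : ℕ, 1 ≤ M → ∑ k ∈ Finset.Icc 1 M, (F k - F (k + 1)) = F 1 - F (M + 1) := by
    intro M hM
    induction M with
    | zero => omega
    | succ m ih =>
      by_cases hm : 1 ≤ m
      · rw [Finset.sum_Icc_succ_top (by omega), ih hm]; ring
      · have : m = 0 := by omega
        subst this; simp
  have htel := htel N hN
  have hsum : (μ₁ + μ₂) / 2 * ∑ k ∈ Finset.Icc 1 N, ‖x (k + 1) - x k‖ ^ 2
      ≤ F 1 - F (N + 1) := by
    rw [Finset.mul_sum, ← htel]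
    exact Finset.sum_le_sum step
  have goal1 : ∑ k ∈ Finset.Icc 1 N, ‖x (k + 1) - x k‖ ^ 2 ≤
      2 * (F 1 - F (N + 1)) / (μ₁ + μ₂) := by
    have heq : 2 * (F 1 - F (N + 1)) / (μ₁ + μ₂) = (F 1 - F (N + 1)) / ((μ₁ + μ₂) / 2) := by
      field_simp
    rw [heq, le_div_iff₀ (by positivity), mul_comm]
    exact hsum
  refine ⟨goal1, ?_⟩
  -- minimal step
  have hne : (Finset.Icc 1 N).Nonempty := ⟨1, by simp [hN]⟩
  obtain ⟨k0, hk0, hk0min⟩ := Finset.exists_min_image (Finset.Icc 1 N)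
    (fun k => ‖x (k + 1) - x k‖) hne
  refine ⟨k0, hk0, ?_⟩
  have hcard : ∀ k ∈ Finset.Icc 1 N, ‖x (k0 + 1) - x k0‖ ^ 2 ≤ ‖x (k + 1) - x k‖ ^ 2 := by
    intro k hk
    exact pow_le_pow_left₀ (norm_nonneg _) (hk0min k hk) 2
  have hNsum : (N : ℝ) * ‖x (k0 + 1) - x k0‖ ^ 2 ≤
      ∑ k ∈ Finset.Icc 1 N, ‖x (k + 1) - x k‖ ^ 2 := by
    have := Finset.card_nsmul_le_sum (Finset.Icc 1 N)
      (fun k => ‖x (k + 1) - x k‖ ^ 2) (‖x (k0 + 1) - x k0‖ ^ 2) hcard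
    simpa [Nat.card_Icc, nsmul_eq_mul] using this
  have hfs : fstar ≤ F (N + 1) := hlb (x (N + 1))
  have hNpos : (0:ℝ) < N := by exact_mod_cast hN
  have hsq : ‖x (k0 + 1) - x k0‖ ^ 2 ≤ 2 * (F 1 - fstar) / ((μ₁ + μ₂) * N) := by
    rw [le_div_iff₀ (by positivity)]
    calc ‖x (k0 + 1) - x k0‖ ^ 2 * ((μ₁ + μ₂) * N)
        = (μ₁ + μ₂) * ((N : ℝ) * ‖x (k0 + 1) - x k0‖ ^ 2) := by ring
      _ ≤ (μ₁ + μ₂) * ∑ k ∈ Finset.Icc 1 N, ‖x (k + 1) - x k‖ ^ 2 := by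
          exact mul_le_mul_of_nonneg_left hNsum hμ.le
      _ = 2 * ((μ₁ + μ₂) / 2 * ∑ k ∈ Finset.Icc 1 N, ‖x (k + 1) - x k‖ ^ 2) := by ring
      _ ≤ 2 * (F 1 - F (N + 1)) := by
          exact mul_le_mul_of_nonneg_left hsum (by norm_num)
      _ ≤ 2 * (F 1 - fstar) := by linarith
  rw [show (2 * (f₁ (x 1) - f₂ (x 1) - fstar) / ((μ₁ + μ₂) * N)) =
      2 * (F 1 - fstar) / ((μ₁ + μ₂) * N) by simp [hF]]
  exact Real.le_sqrt_of_sq_le hsq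
end

section
/- Let f₁ be L₁-smooth convex (differentiable with L₁-Lipschitz gradient), f₂ be μ₂-strongly convex (possibly nonsmooth), with L₁ > μ₂, and f = f₁ - f₂ ≥ f⋆. Then after N DCA iterations, min_{1≤k≤N+1} ‖g₁^k - g₂^k‖ ≤ sqrt(2L₁²(L₁-μ₂)(f(x¹)-f⋆) / ((L₁² - μ₂²)N + L₁²)), where g₁^k = ∇f₁(x^k) and g₂^k ∈ ∂f₂(x^k) with g₂^k = g₁^{k+1} for k ≤ N. -/
open scoped RealInnerProductSpace

section Helpers

variable {F : Type*} [NormedAddCommGroup F] [InnerProductSpace ℝ F] [CompleteSpace F]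

lemma line_hasDerivAt {f : F → ℝ} {G : F → F} (hgrad : ∀ z, HasGradientAt f (G z) z)
    (x v : F) (t : ℝ) :
    HasDerivAt (fun s : ℝ => f (x + s • v)) ⟪G (x + t • v), v⟫ t := by
  have h1 : HasDerivAt (fun s : ℝ => x + s • v) v t := by
    simpa using ((hasDerivAt_id t).smul_const v).const_add x
  have h2 := (hgrad (x + t • v)).hasFDerivAt
  have h3 := h2.comp_hasDerivAt t h1
  simp at h3
  exact h3

lemma conv_comp_line {f : F → ℝ} (hconv : ConvexOn ℝ Set.univ f) (x v : F) :
    ConvexOn ℝ Set.univ (fun s : ℝ => f (x + s • v)) := by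
  refine ⟨convex_univ, fun s _ t _ a b ha hb hab => ?_⟩
  have hb' : b = 1 - a := by linarith
  subst hb'
  have h : x + (a • s + (1 - a) • t) • v = a • (x + s • v) + (1 - a) • (x + t • v) := by
    simp only [smul_eq_mul, smul_add, smul_smul, add_smul, sub_smul, one_smul]
    abel
  show f (x + (a • s + (1 - a) • t) • v) ≤ a • f (x + s • v) + (1 - a) • f (x + t • v)
  rw [h]
  exact hconv.2 trivial trivial ha hb (by linarith)

/-- First-order condition: convex differentiable function lies above tangent. -/
lemma convex_lower {f : F → ℝ} {G : F → F} (hconv : ConvexOn ℝ Set.univ f)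
    (hgrad : ∀ z, HasGradientAt f (G z) z) (x y : F) :
    f x + ⟪G x, y - x⟫ ≤ f y := by
  have h0 : HasDerivAt (fun s : ℝ => f (x + s • (y - x))) ⟪G x, y - x⟫ 0 := by
    simpa using line_hasDerivAt hgrad x (y - x) 0
  have := ConvexOn.le_slope_of_hasDerivAt (S := (Set.univ : Set ℝ))
    (conv_comp_line hconv x (y - x)) trivial trivial one_pos h0
  simp only [slope_def_field] at this
  simp only [zero_smul, add_zero, one_smul] at this
  have h1 : x + (y - x) = y := by abel
  rw [h1] at this
  have : ⟪G x, y - x⟫ ≤ f y - f x := by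
    simpa [div_one] using this
  linarith

/-- Descent lemma: quadratic upper bound for L-smooth functions. -/
lemma smooth_upper {f : F → ℝ} {G : F → F} {L : ℝ} (hL : 0 ≤ L)
    (hgrad : ∀ z, HasGradientAt f (G z) z)
    (hlip : ∀ x y, ‖G x - G y‖ ≤ L * ‖x - y‖) (x y : F) :
    f y ≤ f x + ⟪G x, y - x⟫ + L / 2 * ‖y - x‖ ^ 2 := by
  set v := y - x with hv
  set ψ : ℝ → ℝ := fun t => f (x + t • v) - t * ⟪G x, v⟫ - L / 2 * t ^ 2 * ‖v‖ ^ 2 with hψ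
  have hder : ∀ t : ℝ, HasDerivAt ψ (⟪G (x + t • v), v⟫ - ⟪G x, v⟫ - L * t * ‖v‖ ^ 2) t := by
    intro t
    have h1 := line_hasDerivAt hgrad x v t
    have h2 : HasDerivAt (fun t : ℝ => t * ⟪G x, v⟫) ⟪G x, v⟫ t := by
      simpa using (hasDerivAt_id t).mul_const ⟪G x, v⟫
    have h3 : HasDerivAt (fun t : ℝ => L / 2 * t ^ 2 * ‖v‖ ^ 2) (L * t * ‖v‖ ^ 2) t := by
      have h := ((hasDerivAt_pow 2 t).const_mul (L / 2)).mul_const (‖v‖ ^ 2)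
      refine h.congr_deriv (by ring)
    exact (h1.sub h2).sub h3
  have hanti : AntitoneOn ψ (Set.Icc 0 1) := by
    apply antitoneOn_of_deriv_nonpos (convex_Icc 0 1)
    · exact fun t _ => ((hder t).continuousAt).continuousWithinAt
    · intro t ht
      exact ((hder t).differentiableAt).differentiableWithinAt
    · intro t ht
      rw [interior_Icc] at ht
      rw [(hder t).deriv]
      have hip : ⟪G (x + t • v) - G x, v⟫ ≤ L * t * ‖v‖ ^ 2 := by
        calc ⟪G (x + t • v) - G x, v⟫ ≤ ‖G (x + t • v) - G x‖ * ‖v‖ :=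
              real_inner_le_norm _ _
          _ ≤ (L * ‖(x + t • v) - x‖) * ‖v‖ := by
              apply mul_le_mul_of_nonneg_right _ (norm_nonneg _)
              exact hlip _ _
          _ = L * t * ‖v‖ ^ 2 := by
              rw [add_sub_cancel_left, norm_smul, Real.norm_eq_abs,
                abs_of_pos ht.1]
              ring
      rw [inner_sub_left] at hip
      linarith
  have := hanti (Set.left_mem_Icc.2 zero_le_one) (Set.right_mem_Icc.2 zero_le_one) zero_le_one
  simp only [hψ, zero_smul, add_zero, one_smul, zero_mul, one_pow, mul_one, sub_zero,
    zero_pow, mul_zero] at this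
  have h1 : x + v = y := by rw [hv]; abel
  rw [h1] at this
  linarith

/-- Cocoercivity of L-smooth convex functions. -/
lemma cocoercive {f : F → ℝ} {G : F → F} {L : ℝ} (hL : 0 < L)
    (hconv : ConvexOn ℝ Set.univ f)
    (hgrad : ∀ z, HasGradientAt f (G z) z)
    (hlip : ∀ x y, ‖G x - G y‖ ≤ L * ‖x - y‖) (x y : F) :
    f x + ⟪G x, y - x⟫ + 1 / (2 * L) * ‖G y - G x‖ ^ 2 ≤ f y := by
  set φ : F → ℝ := fun z => f z - ⟪G x, z⟫ with hφ
  set Gφ : F → F := fun z => G z - G x with hGφ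
  have hgradφ : ∀ z, HasGradientAt φ (Gφ z) z := by
    intro z
    have h1 := (hgrad z).hasFDerivAt
    have h2 : HasFDerivAt (fun w : F => ⟪G x, w⟫) (InnerProductSpace.toDual ℝ F (G x)) z :=
      (InnerProductSpace.toDual ℝ F (G x)).hasFDerivAt
    have h3 := h1.sub h2
    rw [hasGradientAt_iff_hasFDerivAt, show Gφ z = G z - G x from rfl, map_sub]
    exact h3
  have hconvφ : ConvexOn ℝ Set.univ φ := by
    refine ⟨convex_univ, fun u _ w _ a b ha hb hab => ?_⟩
    have h := hconv.2 (Set.mem_univ u) (Set.mem_univ w) ha hb hab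
    simp only [smul_eq_mul] at h
    simp only [hφ, smul_eq_mul]
    rw [inner_add_right, real_inner_smul_right, real_inner_smul_right]
    nlinarith [h]
  have hlipφ : ∀ u w, ‖Gφ u - Gφ w‖ ≤ L * ‖u - w‖ := by
    intro u w
    simpa [hGφ, sub_sub_sub_cancel_right] using hlip u w
  -- φ is minimized at x since Gφ x = 0
  have hGφx : Gφ x = 0 := by simp [hGφ]
  set z : F := y - (1 / L) • (G y - G x) with hz
  have hmin : φ x + ⟪Gφ x, z - x⟫ ≤ φ z := convex_lower hconvφ hgradφ x z
  rw [hGφx] at hmin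
  simp only [inner_zero_left, add_zero] at hmin
  have hup : φ z ≤ φ y + ⟪Gφ y, z - y⟫ + L / 2 * ‖z - y‖ ^ 2 :=
    smooth_upper hL.le hgradφ hlipφ y z
  have hzy : z - y = -((1 / L) • (G y - G x)) := by rw [hz]; abel
  have hd : ⟪Gφ y, z - y⟫ = -(1 / L) * ‖G y - G x‖ ^ 2 := by
    rw [hzy, inner_neg_right, real_inner_smul_right, hGφ]
    rw [real_inner_self_eq_norm_sq]
    ring
  have hn : ‖z - y‖ ^ 2 = (1 / L) ^ 2 * ‖G y - G x‖ ^ 2 := by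
    rw [hzy, norm_neg, norm_smul, Real.norm_eq_abs, mul_pow, sq_abs]
  rw [hd, hn] at hup
  have hL2 : L / 2 * ((1 / L) ^ 2 * ‖G y - G x‖ ^ 2) = 1 / (2 * L) * ‖G y - G x‖ ^ 2 := by
    field_simp
  have hkey : φ x ≤ φ y - 1 / (2 * L) * ‖G y - G x‖ ^ 2 := by
    rw [hL2] at hup
    have hcomb : φ y + -(1 / L) * ‖G y - G x‖ ^ 2 + 1 / (2 * L) * ‖G y - G x‖ ^ 2
        = φ y - 1 / (2 * L) * ‖G y - G x‖ ^ 2 := by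
      have hL' : L ≠ 0 := ne_of_gt hL
      field_simp
      ring
    rw [hcomb] at hup
    exact le_trans hmin hup
  simp only [hφ] at hkey
  have hinner : ⟪G x, y⟫ - ⟪G x, x⟫ = ⟪G x, y - x⟫ := (inner_sub_right _ _ _).symm
  linarith [hkey, hinner.le, hinner.ge]

/-- Subgradient inequality with strong convexity modulus. -/
lemma strong_subgrad {f₂ : F → ℝ} {μ : ℝ} (hμ : 0 ≤ μ)
    (hsc : ConvexOn ℝ Set.univ (fun z => f₂ z - μ / 2 * ‖z‖ ^ 2))
    {x₀ g : F} (hsub : ∀ y, f₂ y ≥ f₂ x₀ + ⟪g, y - x₀⟫) (y : F) :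
    f₂ x₀ + ⟪g, y - x₀⟫ + μ / 2 * ‖y - x₀‖ ^ 2 ≤ f₂ y := by
  set T : ℝ := f₂ y - f₂ x₀ - ⟪g, y - x₀⟫ - μ / 2 * ‖y - x₀‖ ^ 2 with hT
  have key : ∀ t ∈ Set.Ioc (0:ℝ) 1, -(t * (μ / 2 * ‖y - x₀‖ ^ 2)) ≤ T := by
    intro t ht
    obtain ⟨ht0, ht1⟩ := ht
    set p : F := x₀ + t • (y - x₀) with hp
    have hpc : p = (1 - t) • x₀ + t • y := by
      rw [hp]; simp only [sub_smul, one_smul, smul_sub]; abel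
    have hc := hsc.2 (Set.mem_univ x₀) (Set.mem_univ y) (by linarith : (0:ℝ) ≤ 1 - t)
      ht0.le (by ring)
    simp only [smul_eq_mul] at hc
    rw [← hpc] at hc
    have hs : f₂ x₀ + t * ⟪g, y - x₀⟫ ≤ f₂ p := by
      have := hsub p
      rw [hp] at this ⊢
      simpa [add_sub_cancel_left, real_inner_smul_right] using this
    have hnp : ‖p‖ ^ 2 = ‖x₀‖ ^ 2 + 2 * t * ⟪x₀, y - x₀⟫ + t ^ 2 * ‖y - x₀‖ ^ 2 := by
      rw [hp, ← real_inner_self_eq_norm_sq, ← real_inner_self_eq_norm_sq,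
        ← real_inner_self_eq_norm_sq, inner_add_add_self]
      simp only [real_inner_smul_left, real_inner_smul_right,
        real_inner_comm (y - x₀) x₀]
      ring
    have hny : ‖y‖ ^ 2 = ‖x₀‖ ^ 2 + 2 * ⟪x₀, y - x₀⟫ + ‖y - x₀‖ ^ 2 := by
      have hyy : y = x₀ + (y - x₀) := by abel
      nth_rewrite 1 [hyy]
      rw [← real_inner_self_eq_norm_sq, ← real_inner_self_eq_norm_sq,
        ← real_inner_self_eq_norm_sq, inner_add_add_self]
      rw [real_inner_comm (y - x₀) x₀]
      ring
    -- combine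
    have e2 : μ / 2 * ‖p‖ ^ 2 = μ / 2 * (1 - t) * ‖x₀‖ ^ 2 + μ / 2 * t * ‖y‖ ^ 2
        - μ / 2 * t * (1 - t) * ‖y - x₀‖ ^ 2 := by rw [hnp, hny]; ring
    have hfinal : μ / 2 * (t * (1 - t)) * ‖y - x₀‖ ^ 2
        ≤ t * (f₂ y - f₂ x₀ - ⟪g, y - x₀⟫) := by nlinarith [hc, hs, e2]
    nlinarith [hfinal, ht0, mul_pos ht0 ht0]
  -- limit t → 0⁺
  have hlim : Filter.Tendsto (fun t : ℝ => -(t * (μ / 2 * ‖y - x₀‖ ^ 2))) (nhdsWithin 0 (Set.Ioi 0)) (nhds 0) := by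
    have : Filter.Tendsto (fun t : ℝ => -(t * (μ / 2 * ‖y - x₀‖ ^ 2))) (nhds 0) (nhds (-(0 * (μ / 2 * ‖y - x₀‖ ^ 2)))) := by
      apply Filter.Tendsto.neg
      exact (continuous_id.mul continuous_const).tendsto 0
    simpa using this.mono_left nhdsWithin_le_nhds
  have hev : ∀ᶠ t in nhdsWithin (0:ℝ) (Set.Ioi 0), -(t * (μ / 2 * ‖y - x₀‖ ^ 2)) ≤ T := by
    filter_upwards [Ioc_mem_nhdsGT_of_mem (Set.left_mem_Ico.2 one_pos)] with t ht
    exact key t ht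
  have h0T : (0:ℝ) ≤ T := le_of_tendsto hlim hev
  rw [hT] at h0T
  linarith

end Helpers

set_option maxHeartbeats 1000000 in
/-- Corollary 3.1 (ii): `f₁` `L₁`-smooth convex with gradient `G₁`, `f₂`
`μ₂`-strongly convex (possibly nonsmooth) with subgradients `g₂^k`, `L₁ > μ₂`,
`f = f₁ - f₂ ≥ f⋆`. After `N` DCA iterations,
`min_{1 ≤ k ≤ N+1} ‖G₁(x^k) - g₂^k‖ ≤ √(2 L₁² (L₁ - μ₂)(f(x¹) - f⋆) / ((L₁² - μ₂²) N + L₁²))`. -/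
theorem stmt_11 {n : ℕ} (f₁ f₂ : EuclideanSpace ℝ (Fin n) → ℝ) (L₁ μ₂ : ℝ)
    (hμ₂ : 0 ≤ μ₂) (hL₁ : μ₂ < L₁)
    (hconv₁ : ConvexOn ℝ Set.univ f₁)
    (G₁ : EuclideanSpace ℝ (Fin n) → EuclideanSpace ℝ (Fin n))
    (hgrad₁ : ∀ x, HasGradientAt f₁ (G₁ x) x)
    (hlip₁ : ∀ x y, ‖G₁ x - G₁ y‖ ≤ L₁ * ‖x - y‖)
    (hsc₂ : ConvexOn ℝ Set.univ (fun x => f₂ x - μ₂ / 2 * ‖x‖ ^ 2))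
    (fstar : ℝ) (hlb : ∀ x, fstar ≤ f₁ x - f₂ x)
    (N : ℕ) (hN : 1 ≤ N)
    (x g₂ : ℕ → EuclideanSpace ℝ (Fin n))
    (hg₂ : ∀ k ∈ Finset.Icc 1 (N + 1), ∀ y, f₂ y ≥ f₂ (x k) + ⟪g₂ k, y - x k⟫)
    (hdca : ∀ k ∈ Finset.Icc 1 N, G₁ (x (k + 1)) = g₂ k) :
    ∃ k ∈ Finset.Icc 1 (N + 1),
      ‖G₁ (x k) - g₂ k‖ ≤
        Real.sqrt (2 * L₁ ^ 2 * (L₁ - μ₂) * (f₁ (x 1) - f₂ (x 1) - fstar) /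
          ((L₁ ^ 2 - μ₂ ^ 2) * N + L₁ ^ 2)) := by
  have hd : 0 < L₁ - μ₂ := sub_pos.2 hL₁
  have hL1pos : 0 < L₁ := lt_of_le_of_lt hμ₂ hL₁
  have hdne : L₁ - μ₂ ≠ 0 := ne_of_gt hd
  -- per-step descent
  have hstep : ∀ k ∈ Finset.Icc 1 N, (L₁ + μ₂) * ‖G₁ (x k) - g₂ k‖ ^ 2 ≤
      2 * L₁ ^ 2 * ((f₁ (x k) - f₂ (x k)) - (f₁ (x (k+1)) - f₂ (x (k+1)))) := by
    intro k hk
    have hk1 : k ∈ Finset.Icc 1 (N + 1) := by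
      simp only [Finset.mem_Icc] at hk ⊢; omega
    have hgk : G₁ (x (k+1)) = g₂ k := hdca k hk
    have c1 := cocoercive hL1pos hconv₁ hgrad₁ hlip₁ (x (k+1)) (x k)
    have c2 := strong_subgrad hμ₂ hsc₂ (hg₂ k hk1) (x (k+1))
    rw [hgk] at c1
    have hneg : x k - x (k+1) = -(x (k+1) - x k) := by abel
    rw [hneg, inner_neg_right] at c1
    have hrk : G₁ (x k) - g₂ k = G₁ (x k) - G₁ (x (k+1)) := by rw [hgk]
    set A := ‖G₁ (x k) - g₂ k‖ with hA
    set B := ‖x (k+1) - x k‖ with hB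
    have c3 : A ≤ L₁ * B := by
      rw [hA, hrk, hB, norm_sub_rev (x (k+1)) (x k)]
      exact hlip₁ _ _
    have hA0 : 0 ≤ A := norm_nonneg _
    have hB0 : 0 ≤ B := norm_nonneg _
    have hsum : 1 / (2 * L₁) * A ^ 2 + μ₂ / 2 * B ^ 2 ≤
        (f₁ (x k) - f₂ (x k)) - (f₁ (x (k+1)) - f₂ (x (k+1))) := by linarith
    have h1 : A ^ 2 ≤ L₁ ^ 2 * B ^ 2 := by nlinarith
    have h3 : 2 * L₁ ^ 2 * (1 / (2 * L₁) * A ^ 2 + μ₂ / 2 * B ^ 2)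
        = L₁ * A ^ 2 + μ₂ * (L₁ ^ 2 * B ^ 2) := by
      field_simp
    have h4 : 2 * L₁ ^ 2 * (1 / (2 * L₁) * A ^ 2 + μ₂ / 2 * B ^ 2) ≤
        2 * L₁ ^ 2 * ((f₁ (x k) - f₂ (x k)) - (f₁ (x (k+1)) - f₂ (x (k+1)))) := by
      apply mul_le_mul_of_nonneg_left hsum
      positivity
    nlinarith [h4, h3, mul_nonneg hμ₂ (sq_nonneg A)]
  -- bound at an arbitrary iterate via the lower bound fstar
  have hany : ∀ k ∈ Finset.Icc 1 (N + 1), ‖G₁ (x k) - g₂ k‖ ^ 2 ≤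
      2 * (L₁ - μ₂) * ((f₁ (x k) - f₂ (x k)) - fstar) := by
    intro k hk
    set c : ℝ := 1 / (L₁ - μ₂) with hc
    set rk := G₁ (x k) - g₂ k with hrk
    set y : EuclideanSpace ℝ (Fin n) := x k - c • rk with hy
    have hup := smooth_upper hL1pos.le hgrad₁ hlip₁ (x k) y
    have hlow := strong_subgrad hμ₂ hsc₂ (hg₂ k hk) y
    have hyx : y - x k = -(c • rk) := by rw [hy]; abel
    have hinner : ⟪G₁ (x k), y - x k⟫ - ⟪g₂ k, y - x k⟫ = -(c * ‖rk‖ ^ 2) := by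
      rw [← inner_sub_left, ← hrk, hyx, inner_neg_right, real_inner_smul_right,
        real_inner_self_eq_norm_sq]
    have hnorm : ‖y - x k‖ ^ 2 = c ^ 2 * ‖rk‖ ^ 2 := by
      rw [hyx, norm_neg, norm_smul, Real.norm_eq_abs, mul_pow, sq_abs]
    have hfs := hlb y
    have hcc : L₁ / 2 * (c ^ 2 * ‖rk‖ ^ 2) - μ₂ / 2 * (c ^ 2 * ‖rk‖ ^ 2)
        = c / 2 * ‖rk‖ ^ 2 := by
      rw [hc]
      field_simp
    have hmid : fstar ≤ (f₁ (x k) - f₂ (x k)) - c / 2 * ‖rk‖ ^ 2 := by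
      rw [hnorm] at hup hlow
      linarith [hup, hlow, hinner, hcc, hfs]
    have hid : 2 * (L₁ - μ₂) * (c / 2 * ‖rk‖ ^ 2) = ‖rk‖ ^ 2 := by
      rw [hc]
      field_simp
    calc ‖rk‖ ^ 2 = 2 * (L₁ - μ₂) * (c / 2 * ‖rk‖ ^ 2) := hid.symm
      _ ≤ 2 * (L₁ - μ₂) * ((f₁ (x k) - f₂ (x k)) - fstar) := by
          apply mul_le_mul_of_nonneg_left (by linarith) (by linarith)
  -- the minimizing index
  obtain ⟨k₀, hk₀mem, hk₀min⟩ := Finset.exists_min_image (Finset.Icc 1 (N + 1))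
    (fun k => ‖G₁ (x k) - g₂ k‖) ⟨1, by simp⟩
  set M := ‖G₁ (x k₀) - g₂ k₀‖ with hM
  have hM0 : 0 ≤ M := norm_nonneg _
  -- telescoping sum
  have htel : ∑ i ∈ Finset.range N,
      ((f₁ (x (i+1)) - f₂ (x (i+1))) - (f₁ (x (i+2)) - f₂ (x (i+2))))
      = (f₁ (x 1) - f₂ (x 1)) - (f₁ (x (N+1)) - f₂ (x (N+1))) := by
    simpa using Finset.sum_range_sub' (fun i => f₁ (x (i+1)) - f₂ (x (i+1))) N
  have hterm : ∀ i ∈ Finset.range N, (L₁ + μ₂) * M ^ 2 ≤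
      2 * L₁ ^ 2 * ((f₁ (x (i+1)) - f₂ (x (i+1))) - (f₁ (x (i+2)) - f₂ (x (i+2)))) := by
    intro i hi
    rw [Finset.mem_range] at hi
    have hk : i + 1 ∈ Finset.Icc 1 N := by simp; omega
    have hk1 : i + 1 ∈ Finset.Icc 1 (N + 1) := by simp; omega
    have h := hstep (i+1) hk
    have hMle : M ≤ ‖G₁ (x (i+1)) - g₂ (i+1)‖ := hk₀min _ hk1
    have : (L₁ + μ₂) * M ^ 2 ≤ (L₁ + μ₂) * ‖G₁ (x (i+1)) - g₂ (i+1)‖ ^ 2 := by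
      apply mul_le_mul_of_nonneg_left _ (by linarith)
      nlinarith [norm_nonneg (G₁ (x (i+1)) - g₂ (i+1))]
    calc (L₁ + μ₂) * M ^ 2 ≤ (L₁ + μ₂) * ‖G₁ (x (i+1)) - g₂ (i+1)‖ ^ 2 := this
      _ ≤ _ := h
  have hsumN : (N : ℝ) * ((L₁ + μ₂) * M ^ 2) ≤
      2 * L₁ ^ 2 * ((f₁ (x 1) - f₂ (x 1)) - (f₁ (x (N+1)) - f₂ (x (N+1)))) := by
    calc (N : ℝ) * ((L₁ + μ₂) * M ^ 2)
        = ∑ _i ∈ Finset.range N, (L₁ + μ₂) * M ^ 2 := by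
          rw [Finset.sum_const, Finset.card_range, nsmul_eq_mul]
      _ ≤ ∑ i ∈ Finset.range N,
            2 * L₁ ^ 2 * ((f₁ (x (i+1)) - f₂ (x (i+1))) - (f₁ (x (i+2)) - f₂ (x (i+2)))) :=
          Finset.sum_le_sum hterm
      _ = _ := by rw [← Finset.mul_sum, htel]
  -- last iterate bound
  have hNmem : N + 1 ∈ Finset.Icc 1 (N + 1) := by simp
  have hlast : M ^ 2 ≤ 2 * (L₁ - μ₂) * ((f₁ (x (N+1)) - f₂ (x (N+1))) - fstar) := by
    have h := hany (N+1) hNmem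
    have hMle : M ≤ ‖G₁ (x (N+1)) - g₂ (N+1)‖ := hk₀min _ hNmem
    nlinarith [norm_nonneg (G₁ (x (N+1)) - g₂ (N+1))]
  -- combine
  have hmup : 0 < L₁ ^ 2 - μ₂ ^ 2 := by nlinarith
  have hD : 0 < (L₁ ^ 2 - μ₂ ^ 2) * N + L₁ ^ 2 := by
    have h1 : (0:ℝ) ≤ ((L₁ ^ 2 - μ₂ ^ 2) : ℝ) * N := mul_nonneg hmup.le (Nat.cast_nonneg N)
    nlinarith
  have hnum : M ^ 2 * ((L₁ ^ 2 - μ₂ ^ 2) * N + L₁ ^ 2) ≤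
      2 * L₁ ^ 2 * (L₁ - μ₂) * (f₁ (x 1) - f₂ (x 1) - fstar) := by
    nlinarith [mul_le_mul_of_nonneg_left hsumN hd.le,
      mul_le_mul_of_nonneg_left hlast (sq_nonneg L₁)]
  refine ⟨k₀, hk₀mem, ?_⟩
  rw [← hM, show M = Real.sqrt (M ^ 2) from (Real.sqrt_sq hM0).symm]
  apply Real.sqrt_le_sqrt
  rw [le_div_iff₀ hD]
  exact hnum
end

section
/- Let h: ℝⁿ → ℝ be convex, differentiable, with L-Lipschitz gradient, and let μ ≥ 0 be such that h - (μ/2)‖·‖² is convex, μ < L. Then for all x, y: h(x) - h(y) - ⟨∇h(y), x - y⟩ ≥ (1/(2(1-μ/L)))·[(1/L)‖∇h(x) - ∇h(y)‖² + μ‖x - y‖² - (2μ/L)⟨∇h(y) - ∇h(x), y - x⟩]. -/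
/-!
Subtracting `μ/2 ‖·‖²` turns `h` into a convex function `f` whose Bregman divergence is that of
`h` minus `μ/2 ‖x - y‖²`; by the descent lemma it is bounded above by `(L - μ)/2 ‖x - y‖²`.
For a convex function with such a quadratic upper bound, comparing the tangent plane at `y`
with the upper bound at `x` at the point `x + (∇f y - ∇f x)/(L - μ)` gives
`D_f(x, y) ≥ ‖∇f x - ∇f y‖² / (2 (L - μ))`. Adding back `μ/2 ‖x - y‖²` and expanding
`∇f = G - μ id` yields the interpolation inequality.
-/

open scoped RealInnerProductSpace

open Set

section Bregman

variable {E : Type*} [NormedAddCommGroup E] [InnerProductSpace ℝ E] {f : E → ℝ} {g : E → E}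

def bregman (f : E → ℝ) (g : E → E) (x y : E) : ℝ := f x - f y - ⟪g y, x - y⟫

theorem bregman_sub_half_mul_norm_sq (f : E → ℝ) (g : E → E) (μ : ℝ) (x y : E) :
    bregman (fun x => f x - μ / 2 * ‖x‖ ^ 2) (fun x => g x - μ • x) x y =
      bregman f g x y - μ / 2 * ‖x - y‖ ^ 2 := by
  have hsq : ‖x‖ ^ 2 = ‖y‖ ^ 2 + 2 * ⟪y, x - y⟫ + ‖x - y‖ ^ 2 := by
    rw [← norm_add_sq_real, add_sub_cancel]
  simp only [bregman, inner_sub_left, real_inner_smul_left, hsq]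
  ring

theorem norm_sub_sq_div_le_bregman {ℓ : ℝ} (hℓ : 0 < ℓ) {x y : E}
    (hlower : ∀ z, 0 ≤ bregman f g z y) (hupper : ∀ z, bregman f g z x ≤ ℓ / 2 * ‖z - x‖ ^ 2) :
    ‖g x - g y‖ ^ 2 / (2 * ℓ) ≤ bregman f g x y := by
  set d := g y - g x
  set z := x + ℓ⁻¹ • d
  have hzx : z - x = ℓ⁻¹ • d := add_sub_cancel_left _ _
  have hzy : z - y = (x - y) + ℓ⁻¹ • d := add_sub_right_comm _ _ _
  have hd : ‖d‖ ^ 2 = ⟪g y, d⟫ - ⟪g x, d⟫ := by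
    rw [← inner_sub_left, real_inner_self_eq_norm_sq]
  have hlow := hlower z
  have hup := hupper z
  simp only [bregman, hzx, hzy, inner_add_right, real_inner_smul_right, norm_smul, mul_pow,
    norm_inv, Real.norm_of_nonneg hℓ.le, norm_sub_rev (g x)] at hlow hup ⊢
  field_simp at hup hlow ⊢
  linarith

variable [CompleteSpace E]

theorem HasGradientAt.hasDerivAt_comp_add_smul {f' a v : E} {t : ℝ}
    (hf : HasGradientAt f f' (a + t • v)) :
    HasDerivAt (fun s : ℝ => f (a + s • v)) ⟪f', v⟫ t := by
  have hline : HasDerivAt (fun s : ℝ => a + s • v) v t := by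
    simpa using ((hasDerivAt_id t).smul_const v).const_add a
  simpa [Function.comp_def] using (hasGradientAt_iff_hasFDerivAt.mp hf).comp_hasDerivAt t hline

theorem HasGradientAt.sub_half_mul_norm_sq {f' x : E} (hf : HasGradientAt f f' x) (μ : ℝ) :
    HasGradientAt (fun x => f x - μ / 2 * ‖x‖ ^ 2) (f' - μ • x) x := by
  rw [hasGradientAt_iff_hasFDerivAt] at hf ⊢
  refine (hf.sub ((hasStrictFDerivAt_norm_sq x).hasFDerivAt.const_mul (μ / 2))).congr_fderiv ?_
  ext w
  simp
  ring

theorem ConvexOn.bregman_nonneg (hf : ConvexOn ℝ univ f) {y : E} (hg : HasGradientAt f (g y) y)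
    (x : E) : 0 ≤ bregman f g x y := by
  have hline : ConvexOn ℝ univ (fun t : ℝ => f (y + t • (x - y))) := by
    have : (fun t : ℝ => y + t • (x - y)) = AffineMap.lineMap y x := by
      ext t
      simp [AffineMap.lineMap_apply_module', add_comm]
    simpa [Function.comp_def, ← this] using hf.comp_affineMap (AffineMap.lineMap y x)
  have hd : HasDerivAt (fun t : ℝ => f (y + t • (x - y))) ⟪g y, x - y⟫ 0 :=
    HasGradientAt.hasDerivAt_comp_add_smul (by simpa using hg)
  have hslope := hline.le_slope_of_hasDerivAt (mem_univ 0) (mem_univ 1) one_pos hd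
  simp only [slope_def_field, one_smul, zero_smul, add_zero, add_sub_cancel, sub_zero,
    div_one] at hslope
  unfold bregman
  linarith

theorem bregman_le_of_lipschitz_gradient {L : ℝ} (hg : ∀ x, HasGradientAt f (g x) x)
    (hlip : ∀ x y, ‖g x - g y‖ ≤ L * ‖x - y‖) (x y : E) :
    bregman f g x y ≤ L / 2 * ‖x - y‖ ^ 2 := by
  set v := x - y
  set ψ : ℝ → ℝ := fun t => f (y + t • v) - t * ⟪g y, v⟫ - L / 2 * t ^ 2 * ‖v‖ ^ 2
  have hψ : ∀ t, HasDerivAt ψ (⟪g (y + t • v), v⟫ - ⟪g y, v⟫ - L * t * ‖v‖ ^ 2) t := by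
    intro t
    refine (((hg _).hasDerivAt_comp_add_smul.sub (hasDerivAt_mul_const ⟪g y, v⟫)).sub
      (((hasDerivAt_pow 2 t).const_mul (L / 2)).mul_const (‖v‖ ^ 2))).congr_deriv ?_
    push_cast
    ring
  have hψ' : ∀ t > 0, ⟪g (y + t • v), v⟫ - ⟪g y, v⟫ ≤ L * t * ‖v‖ ^ 2 := by
    intro t ht
    calc ⟪g (y + t • v), v⟫ - ⟪g y, v⟫ = ⟪g (y + t • v) - g y, v⟫ := (inner_sub_left ..).symm
      _ ≤ ‖g (y + t • v) - g y‖ * ‖v‖ := real_inner_le_norm _ _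
      _ ≤ L * ‖(y + t • v) - y‖ * ‖v‖ := by gcongr; exact hlip _ _
      _ = L * t * ‖v‖ ^ 2 := by
        rw [add_sub_cancel_left, norm_smul, Real.norm_of_nonneg ht.le]; ring
  have hanti : AntitoneOn ψ (Ici 0) := by
    refine antitoneOn_of_hasDerivWithinAt_nonpos (convex_Ici 0)
      (fun t _ => (hψ t).continuousAt.continuousWithinAt) (fun t _ => (hψ t).hasDerivWithinAt)
      (fun t ht => ?_)
    rw [interior_Ici] at ht
    linarith [hψ' t ht]
  have h01 := hanti self_mem_Ici (mem_Ici.2 zero_le_one) zero_le_one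
  simp only [ψ, zero_smul, add_zero, one_smul, add_sub_cancel, v] at h01
  unfold bregman
  linarith

end Bregman

theorem stmt_16_general {n : ℕ} (h : EuclideanSpace ℝ (Fin n) → ℝ) (L μ : ℝ)
    (hμ : 0 ≤ μ) (hμL : μ < L)
    (G : EuclideanSpace ℝ (Fin n) → EuclideanSpace ℝ (Fin n))
    (hgrad : ∀ x, HasGradientAt h (G x) x)
    (hlip : ∀ x y, ‖G x - G y‖ ≤ L * ‖x - y‖)
    (hsc : ConvexOn ℝ Set.univ (fun x => h x - μ / 2 * ‖x‖ ^ 2)) :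
    ∀ x y : EuclideanSpace ℝ (Fin n),
      h x - h y - ⟪G y, x - y⟫ ≥
        1 / (2 * (1 - μ / L)) *
          (1 / L * ‖G x - G y‖ ^ 2 + μ * ‖x - y‖ ^ 2 -
            2 * μ / L * ⟪G y - G x, y - x⟫) := by
  intro x y
  have hupper : ∀ z, bregman (fun x => h x - μ / 2 * ‖x‖ ^ 2) (fun x => G x - μ • x) z x ≤
      (L - μ) / 2 * ‖z - x‖ ^ 2 := fun z => by
    rw [bregman_sub_half_mul_norm_sq]
    linarith [bregman_le_of_lipschitz_gradient hgrad hlip z x]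
  have hlower := norm_sub_sq_div_le_bregman (sub_pos.2 hμL)
    (hsc.bregman_nonneg ((hgrad y).sub_half_mul_norm_sq μ)) hupper
  rw [bregman_sub_half_mul_norm_sq] at hlower
  have hexpand : ‖(G x - μ • x) - (G y - μ • y)‖ ^ 2 =
      ‖G x - G y‖ ^ 2 - 2 * μ * ⟪G y - G x, y - x⟫ + μ ^ 2 * ‖x - y‖ ^ 2 := by
    rw [show (G x - μ • x) - (G y - μ • y) = (G x - G y) - μ • (x - y) by module,
      norm_sub_sq_real, real_inner_smul_right, norm_smul, mul_pow, Real.norm_eq_abs, sq_abs,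
      ← inner_neg_neg, neg_sub, neg_sub]
    ring
  rw [hexpand] at hlower
  have hrhs : 1 / (2 * (1 - μ / L)) *
      (1 / L * ‖G x - G y‖ ^ 2 + μ * ‖x - y‖ ^ 2 - 2 * μ / L * ⟪G y - G x, y - x⟫) =
      (‖G x - G y‖ ^ 2 - 2 * μ * ⟪G y - G x, y - x⟫ + μ ^ 2 * ‖x - y‖ ^ 2) / (2 * (L - μ)) +
        μ / 2 * ‖x - y‖ ^ 2 := by
    have : L ≠ 0 := (hμ.trans_lt hμL).ne'
    have : L - μ ≠ 0 := (sub_pos.2 hμL).ne'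
    field_simp
    ring
  rw [ge_iff_le, hrhs]
  change _ ≤ bregman h G x y
  linarith

/-- interpolation inequality for an `L`-smooth `μ`-strongly convex function
(necessity part of the Taylor–Hendrickx–Glineur interpolation theorem). -/
theorem stmt_16 {n : ℕ} (h : EuclideanSpace ℝ (Fin n) → ℝ) (L μ : ℝ)
    (hμ : 0 ≤ μ) (hμL : μ < L)
    (hconv : ConvexOn ℝ Set.univ h)
    (G : EuclideanSpace ℝ (Fin n) → EuclideanSpace ℝ (Fin n))
    (hgrad : ∀ x, HasGradientAt h (G x) x)
    (hlip : ∀ x y, ‖G x - G y‖ ≤ L * ‖x - y‖)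
    (hsc : ConvexOn ℝ Set.univ (fun x => h x - μ / 2 * ‖x‖ ^ 2)) :
    ∀ x y : EuclideanSpace ℝ (Fin n),
      h x - h y - ⟪G y, x - y⟫ ≥
        1 / (2 * (1 - μ / L)) *
          (1 / L * ‖G x - G y‖ ^ 2 + μ * ‖x - y‖ ^ 2 -
            2 * μ / L * ⟪G y - G x, y - x⟫) :=
  stmt_16_general h L μ hμ hμL G hgrad hlip hsc
end
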